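/- Let h : ℝ × [−1,1] → ℝ be continuous and bounded, twice continuously differentiable in the open strip ℝ × (−1,1) with Δh = 0 there, and satisfying h(x,−1) = h(x,1) = 0 for all x ∈ ℝ. Then h is identically zero on ℝ × [−1,1]. -/

import Mathlib

/-!
With `k = π/4`, the barrier `cosh (k x) cos (k y)` is harmonic and on the strip it is at least
`cos k · cosh (k x)`, which is positive and grows without bound in `|x|`. Given `η > 0`, pick `R`
so large that `η cos k cosh (k R)` exceeds the bound of `h`: then the harmonic function
`h - η · barrier` is `≤ 0` on the boundary of `[-R, R] × [-1, 1]`, hence inside by the weak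
maximum principle. Letting `η → 0` gives `h ≤ 0`, and the same argument for `-h` gives `h ≥ 0`.

The weak maximum principle is reduced to the strict one by adding `ε x²`; the strict one holds
because at an interior maximum both second partial derivatives are `≤ 0`.
-/

open Set Metric MeasureTheory

/-- The Laplacian of a function on `ℝ × ℝ`: sum of the two second partial derivatives. -/
noncomputable def lap2 (u : ℝ × ℝ → ℝ) (p : ℝ × ℝ) : ℝ :=
  deriv (fun t => deriv (fun s => u (s, p.2)) t) p.1 +
  deriv (fun t => deriv (fun s => u (p.1, s)) t) p.2

open Filter Topology Real

lemma le_of_forall_pos_le_add_mul {a M r : ℝ} (h : ∀ ε > 0, a ≤ M + ε * r) : a ≤ M := by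
  have hlim : Tendsto (fun ε => M + ε * r) (𝓝[>] 0) (𝓝 M) :=
    (Continuous.tendsto' (by fun_prop) 0 M (by simp)).mono_left nhdsWithin_le_nhds
  exact ge_of_tendsto hlim (eventually_nhdsWithin_of_forall h)

lemma IsLocalMax.deriv_deriv_nonpos {f : ℝ → ℝ} {a : ℝ} (hf : IsLocalMax f a)
    (hc : ContinuousAt f a) : deriv (deriv f) a ≤ 0 := by
  by_contra! hpos
  have hmin : IsLocalMin f a := isLocalMin_of_deriv_deriv_pos hpos hf.deriv_eq_zero hc
  have hconst : f =ᶠ[𝓝 a] fun _ => f a :=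
    (hf.and hmin).mono fun x hx => le_antisymm hx.1 hx.2
  have := hconst.deriv.deriv_eq
  simp only [deriv_const', deriv_const] at this
  linarith

lemma lap2_eq_iteratedDeriv (u : ℝ × ℝ → ℝ) (p : ℝ × ℝ) :
    lap2 u p = iteratedDeriv 2 (fun s => u (s, p.2)) p.1
      + iteratedDeriv 2 (fun t => u (p.1, t)) p.2 := by
  simp only [lap2, iteratedDeriv_eq_iterate]
  rfl

section Laplacian

variable {u : ℝ × ℝ → ℝ} {p : ℝ × ℝ}

lemma ContDiffAt.slice_fst {n : WithTop ℕ∞} (hu : ContDiffAt ℝ n u p) :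
    ContDiffAt ℝ n (fun s => u (s, p.2)) p.1 :=
  hu.comp p.1 (contDiffAt_id.prodMk contDiffAt_const)

lemma ContDiffAt.slice_snd {n : WithTop ℕ∞} (hu : ContDiffAt ℝ n u p) :
    ContDiffAt ℝ n (fun t => u (p.1, t)) p.2 :=
  hu.comp p.2 (contDiffAt_const.prodMk contDiffAt_id)

lemma lap2_add {v : ℝ × ℝ → ℝ} (hu : ContDiffAt ℝ 2 u p) (hv : ContDiffAt ℝ 2 v p) :
    lap2 (u + v) p = lap2 u p + lap2 v p := by
  simp only [lap2_eq_iteratedDeriv, Pi.add_apply]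
  rw [iteratedDeriv_fun_add hu.slice_fst hv.slice_fst,
    iteratedDeriv_fun_add hu.slice_snd hv.slice_snd]
  ring

lemma lap2_sub {v : ℝ × ℝ → ℝ} (hu : ContDiffAt ℝ 2 u p) (hv : ContDiffAt ℝ 2 v p) :
    lap2 (u - v) p = lap2 u p - lap2 v p := by
  simp only [lap2_eq_iteratedDeriv, Pi.sub_apply]
  rw [iteratedDeriv_fun_sub hu.slice_fst hv.slice_fst,
    iteratedDeriv_fun_sub hu.slice_snd hv.slice_snd]
  ring

lemma lap2_const_mul (c : ℝ) : lap2 (fun q => c * u q) p = c * lap2 u p := by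
  simp only [lap2_eq_iteratedDeriv, iteratedDeriv_const_mul_field]
  ring

lemma lap2_neg : lap2 (-u) p = -lap2 u p := by
  simp only [lap2_eq_iteratedDeriv, Pi.neg_apply, iteratedDeriv_fun_neg]
  ring

lemma IsLocalMax.lap2_nonpos (hu : IsLocalMax u p) (hc : ContinuousAt u p) : lap2 u p ≤ 0 := by
  have hfst : Continuous fun s : ℝ => (s, p.2) := by fun_prop
  have hsnd : Continuous fun t : ℝ => (p.1, t) := by fun_prop
  exact add_nonpos
    ((hu.comp_continuous hfst.continuousAt).deriv_deriv_nonpos (hc.comp hfst.continuousAt))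
    ((hu.comp_continuous hsnd.continuousAt).deriv_deriv_nonpos (hc.comp hsnd.continuousAt))

end Laplacian

lemma lap2_fst_sq (p : ℝ × ℝ) : lap2 (fun q => q.1 ^ 2) p = 2 := by
  simp [lap2]

noncomputable def barrier (k : ℝ) (p : ℝ × ℝ) : ℝ := cosh (k * p.1) * cos (k * p.2)

lemma lap2_barrier (k : ℝ) (p : ℝ × ℝ) : lap2 (barrier k) p = 0 := by
  have hlin (x : ℝ) : HasDerivAt (fun x => k * x) k x := by
    simpa using (hasDerivAt_id x).const_mul k
  have hcosh : deriv (fun x => cosh (k * x)) = fun x => k * sinh (k * x) :=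
    funext fun x => by rw [(hlin x).cosh.deriv, mul_comm]
  have hcos : deriv (fun x => cos (k * x)) = fun x => -(k * sin (k * x)) :=
    funext fun x => by rw [(hlin x).cos.deriv]; ring
  simp only [lap2, barrier, deriv_mul_const_field', deriv_const_mul_field']
  rw [hcosh, hcos, ((hlin p.1).sinh.const_mul k).deriv, ((hlin p.2).sin.const_mul k).fun_neg.deriv]
  ring

lemma contDiff_barrier (k : ℝ) : ContDiff ℝ 2 (barrier k) := by
  unfold barrier; fun_prop

lemma cosh_mul_cos_le_barrier {k : ℝ} (hk₀ : 0 ≤ k) (hkπ : k ≤ π) {p : ℝ × ℝ}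
    (hp : p.2 ∈ Icc (-1 : ℝ) 1) : cosh (k * p.1) * cos k ≤ barrier k p := by
  refine mul_le_mul_of_nonneg_left ?_ (cosh_pos _).le
  rw [← cos_abs (k * p.2)]
  refine cos_le_cos_of_nonneg_of_le_pi (abs_nonneg _) hkπ ?_
  rw [abs_mul, abs_of_nonneg hk₀]
  exact mul_le_of_le_one_right hk₀ (abs_le.mpr hp)

theorem IsCompact.le_of_forall_mem_frontier_le_of_lap2_pos {K : Set (ℝ × ℝ)} (hK : IsCompact K)
    {w : ℝ × ℝ → ℝ} {M : ℝ} (hc : ContinuousOn w K) (hlap : ∀ q ∈ interior K, 0 < lap2 w q)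
    (hM : ∀ q ∈ frontier K, w q ≤ M) : ∀ q ∈ K, w q ≤ M := by
  intro q hq
  obtain ⟨q₀, hq₀K, hmax⟩ := hK.exists_isMaxOn ⟨q, hq⟩ hc
  refine (hmax hq).trans (hM q₀ ⟨subset_closure hq₀K, fun hint => ?_⟩)
  have hnhds : K ∈ 𝓝 q₀ := mem_interior_iff_mem_nhds.mp hint
  exact (hlap q₀ hint).not_ge ((hmax.isLocalMax hnhds).lap2_nonpos (hc.continuousAt hnhds))

theorem IsCompact.le_of_forall_mem_frontier_le_of_lap2_nonneg {K : Set (ℝ × ℝ)}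
    (hK : IsCompact K) {w : ℝ × ℝ → ℝ} {M : ℝ} (hc : ContinuousOn w K)
    (hd : ContDiffOn ℝ 2 w (interior K)) (hlap : ∀ q ∈ interior K, 0 ≤ lap2 w q)
    (hM : ∀ q ∈ frontier K, w q ≤ M) : ∀ q ∈ K, w q ≤ M := by
  obtain ⟨r, hr⟩ := hK.bddAbove_image (f := fun q : ℝ × ℝ => q.1 ^ 2) (by fun_prop)
  intro q hq
  refine le_of_forall_pos_le_add_mul (r := r) fun ε hε => ?_
  let v : ℝ × ℝ → ℝ := fun q => ε * q.1 ^ 2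
  have hv : ContDiff ℝ 2 v := by fun_prop
  have hvr : ∀ q ∈ K, v q ≤ ε * r := fun q hq =>
    mul_le_mul_of_nonneg_left (hr (mem_image_of_mem _ hq)) hε.le
  have hstrict := hK.le_of_forall_mem_frontier_le_of_lap2_pos (w := w + v) (M := M + ε * r)
    (hc.add hv.continuous.continuousOn)
    (fun q hq => by
      rw [lap2_add (hd.contDiffAt (isOpen_interior.mem_nhds hq)) hv.contDiffAt,
        lap2_const_mul, lap2_fst_sq]
      linarith [hlap q hq])
    (fun q hq => add_le_add (hM q hq) (hvr q (hK.isClosed.frontier_subset hq))) q hq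
  have : 0 ≤ v q := by positivity
  simp only [Pi.add_apply] at hstrict
  linarith

lemma Real.tendsto_cosh_atTop : Tendsto cosh atTop atTop :=
  tendsto_atTop_mono' atTop ((eventually_ge_atTop 0).mono fun x hx =>
    (self_le_sinh_iff.2 hx).trans (sinh_lt_cosh x).le) tendsto_id

lemma frontier_Icc_prod_Icc {a b c d : ℝ} (hab : a ≤ b) (hcd : c ≤ d) :
    frontier (Icc a b ×ˢ Icc c d) = {a, b} ×ˢ Icc c d ∪ Icc a b ×ˢ {c, d} := by
  rw [frontier_prod_eq, closure_Icc, closure_Icc, frontier_Icc hab, frontier_Icc hcd, union_comm]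

lemma le_mul_barrier_on_frontier_rectangle {h : ℝ × ℝ → ℝ} {C η R : ℝ}
    (hC : ∀ p ∈ univ ×ˢ Icc (-1:ℝ) 1, h p ≤ C)
    (hbc : ∀ x : ℝ, h (x, -1) = 0 ∧ h (x, 1) = 0)
    (hη : 0 < η) (hR₀ : 0 ≤ R) (hR : C ≤ η * (cosh (π / 4 * R) * cos (π / 4))) :
    ∀ q ∈ frontier (Icc (-R) R ×ˢ Icc (-1:ℝ) 1), h q ≤ η * barrier (π / 4) q := by
  have hbarrier {q : ℝ × ℝ} (hq : q.2 ∈ Icc (-1 : ℝ) 1) :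
      cosh (π / 4 * q.1) * cos (π / 4) ≤ barrier (π / 4) q :=
    cosh_mul_cos_le_barrier (by positivity) (by linarith [pi_pos]) hq
  have hcos : 0 ≤ cos (π / 4) := by rw [cos_pi_div_four]; positivity
  rw [frontier_Icc_prod_Icc (by linarith) (by norm_num)]
  rintro ⟨x, y⟩ (⟨hx, hy⟩ | ⟨-, hy⟩)
  · have hcosh : cosh (π / 4 * x) = cosh (π / 4 * R) := by
      rcases hx with rfl | rfl <;> simp
    have := mul_le_mul_of_nonneg_left (hbarrier hy) hη.le
    rw [hcosh] at this
    linarith [hC (x, y) ⟨trivial, hy⟩]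
  · have hpos := mul_nonneg hη.le
      ((mul_nonneg (cosh_pos _).le hcos).trans (hbarrier (q := (x, y)) (by aesop)))
    rcases hy with rfl | rfl <;> simpa [hbc x] using hpos

theorem le_mul_barrier_of_harmonic_on_rectangle {h : ℝ × ℝ → ℝ} {C η R : ℝ}
    (hc : ContinuousOn h (univ ×ˢ Icc (-1:ℝ) 1))
    (hC : ∀ p ∈ univ ×ˢ Icc (-1:ℝ) 1, h p ≤ C)
    (hd : ContDiffOn ℝ 2 h (univ ×ˢ Ioo (-1:ℝ) 1))
    (hharm : ∀ p ∈ univ ×ˢ Ioo (-1:ℝ) 1, lap2 h p = 0)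
    (hbc : ∀ x : ℝ, h (x, -1) = 0 ∧ h (x, 1) = 0)
    (hη : 0 < η) (hR₀ : 0 ≤ R) (hR : C ≤ η * (cosh (π / 4 * R) * cos (π / 4))) :
    ∀ q ∈ Icc (-R) R ×ˢ Icc (-1:ℝ) 1, h q ≤ η * barrier (π / 4) q := by
  have hint : interior (Icc (-R) R ×ˢ Icc (-1:ℝ) 1) ⊆ univ ×ˢ Ioo (-1:ℝ) 1 := by
    rw [interior_prod_eq, interior_Icc, interior_Icc]
    exact prod_mono (subset_univ _) subset_rfl
  have hηb : ContDiff ℝ 2 fun q => η * barrier (π / 4) q := contDiff_const.mul (contDiff_barrier _)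
  intro q hq
  have := (isCompact_Icc.prod isCompact_Icc).le_of_forall_mem_frontier_le_of_lap2_nonneg
    (w := h - fun q => η * barrier (π / 4) q) (M := 0)
    ((hc.mono (prod_mono (subset_univ _) subset_rfl)).sub hηb.continuous.continuousOn)
    ((hd.mono hint).sub hηb.contDiffOn)
    (fun q hq => by
      rw [lap2_sub (hd.contDiffAt ((isOpen_univ.prod isOpen_Ioo).mem_nhds (hint hq)))
        hηb.contDiffAt, lap2_const_mul, lap2_barrier, hharm q (hint hq)]
      simp)
    (fun q hq => sub_nonpos.mpr (le_mul_barrier_on_frontier_rectangle hC hbc hη hR₀ hR q hq))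
    q hq
  exact sub_nonpos.mp this

theorem nonpos_of_harmonic_on_strip {h : ℝ × ℝ → ℝ} {C : ℝ}
    (hc : ContinuousOn h (univ ×ˢ Icc (-1:ℝ) 1))
    (hC : ∀ p ∈ univ ×ˢ Icc (-1:ℝ) 1, h p ≤ C)
    (hd : ContDiffOn ℝ 2 h (univ ×ˢ Ioo (-1:ℝ) 1))
    (hharm : ∀ p ∈ univ ×ˢ Ioo (-1:ℝ) 1, lap2 h p = 0)
    (hbc : ∀ x : ℝ, h (x, -1) = 0 ∧ h (x, 1) = 0) :
    ∀ p ∈ univ ×ˢ Icc (-1:ℝ) 1, h p ≤ 0 := by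
  rintro p ⟨-, hp⟩
  refine le_of_forall_pos_le_add_mul (M := 0) (r := barrier (π / 4) p) fun η hη => ?_
  have hcos : 0 < cos (π / 4) := by rw [cos_pi_div_four]; positivity
  obtain ⟨R, hRC, hpR⟩ : ∃ R, C ≤ η * (cosh (π / 4 * R) * cos (π / 4)) ∧ |p.1| ≤ R :=
    (((tendsto_cosh_atTop.comp (tendsto_id.const_mul_atTop (by positivity))).atTop_mul_const
      hcos).const_mul_atTop hη |>.eventually_ge_atTop C |>.and (eventually_ge_atTop _)).exists
  rw [zero_add]
  exact le_mul_barrier_of_harmonic_on_rectangle hc hC hd hharm hbc hη ((abs_nonneg _).trans hpR)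
    hRC p ⟨abs_le.mp hpR, hp⟩

/-- Liouville-type theorem: a bounded harmonic function on the strip `ℝ × [-1,1]`
vanishing on both boundary lines is identically zero. -/
theorem stmt7 (h : ℝ × ℝ → ℝ)
    (hc : ContinuousOn h (Set.univ ×ˢ Set.Icc (-1:ℝ) 1))
    (hb : ∃ C : ℝ, ∀ p ∈ Set.univ ×ˢ Set.Icc (-1:ℝ) 1, |h p| ≤ C)
    (hd : ContDiffOn ℝ 2 h (Set.univ ×ˢ Set.Ioo (-1:ℝ) 1))
    (hharm : ∀ p ∈ Set.univ ×ˢ Set.Ioo (-1:ℝ) 1, lap2 h p = 0)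
    (hbc : ∀ x : ℝ, h (x, -1) = 0 ∧ h (x, 1) = 0) :
    ∀ p ∈ Set.univ ×ˢ Set.Icc (-1:ℝ) 1, h p = 0 := by
  obtain ⟨C, hC⟩ := hb
  have hupper := nonpos_of_harmonic_on_strip hc (fun p hp => (abs_le.mp (hC p hp)).2) hd hharm hbc
  have hlower := nonpos_of_harmonic_on_strip (h := -h) hc.neg
    (fun p hp => neg_le.mpr (abs_le.mp (hC p hp)).1) hd.neg
    (fun p hp => by rw [lap2_neg, hharm p hp, neg_zero]) (fun x => by simp [hbc x])
  intro p hp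
  exact le_antisymm (hupper p hp) (neg_nonpos.mp (hlower p hp))
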